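/- Let G' be obtained from a connected graph G on n ≥ 1 vertices by attaching q = 3n pendant vertices to s and q = 3n pendant vertices to t, where dist_G(s,t) ≥ 2. Then every vertex of G' at which the number of (unordered) endpoint pairs admitting a shortest path through it is maximized must lie on a shortest s-t path of G. -/

import Mathlib

open SimpleGraph

variable {V : Type*}

/-- The set of shortest `s`-`t` paths in `G`. -/
def shortestPaths (G : SimpleGraph V) (s t : V) : Set (G.Walk s t) :=
  {p | p.IsPath ∧ p.length = G.dist s t}

/-- `σ_{st}`: the number of shortest `s`-`t` paths in `G`. -/
noncomputable def sigmaNum (G : SimpleGraph V) (s t : V) : ℕ :=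
  (shortestPaths G s t).ncard

/-- `σ_{st}(v)`: the number of shortest `s`-`t` paths passing through `v` as an
internal vertex. -/
noncomputable def sigmaVia (G : SimpleGraph V) (s t v : V) : ℕ :=
  {p : G.Walk s t | p.IsPath ∧ p.length = G.dist s t ∧ v ∈ p.support ∧ v ≠ s ∧ v ≠ t}.ncard

/-- Betweenness centrality of `v`, over unordered pairs `{s,t}` with `s,t ≠ v`
(expressed as half of the sum over ordered pairs; terms with `s = t`, `s = v` or
`t = v` vanish by definition of `sigmaVia`). -/
noncomputable def BC (G : SimpleGraph V) [Fintype V] (v : V) : ℚ :=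
  (∑ s : V, ∑ t : V, (sigmaVia G s t v : ℚ) / (sigmaNum G s t)) / 2

/-- `G'`: the graph obtained from `G` by attaching `q` pendant vertices `x₁,…,x_q`
(the left `Fin q` summand), each adjacent only to `s`, and `q` pendant vertices
`y₁,…,y_q` (the right `Fin q` summand), each adjacent only to `t`. -/
def attach2 (G : SimpleGraph V) (s t : V) (q : ℕ) : SimpleGraph (V ⊕ (Fin q ⊕ Fin q)) :=
  SimpleGraph.fromRel (fun a b =>
    (∃ u w, a = Sum.inl u ∧ b = Sum.inl w ∧ G.Adj u w) ∨
    (∃ i : Fin q, a = Sum.inl s ∧ b = Sum.inr (Sum.inl i)) ∨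
    (∃ j : Fin q, a = Sum.inl t ∧ b = Sum.inr (Sum.inr j)))

/-- The number of unordered endpoint pairs `{a,b}`, `a, b ≠ w`, admitting a shortest
`a`-`b` path through `w`. -/
noncomputable def pairCount {W : Type*} (H : SimpleGraph W) (w : W) : ℕ :=
  {z : Sym2 W | ∃ a b : W, z = Sym2.mk a b ∧ a ≠ w ∧ b ≠ w ∧
    ∃ p : H.Walk a b, p.IsPath ∧ p.length = H.dist a b ∧ w ∈ p.support}.ncard

/-!
In a connected graph, `c` lies on a shortest `a`-`b` path iff `d(a, c) + d(c, b) = d(a, b)`.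
In `G'` distances between vertices of `G` are those of `G` (collapsing each pendant vertex onto
its anchor shortens no walk), and a pendant vertex is one step further than its anchor from
everything else. Hence a pendant vertex is interior to no shortest path, and a vertex `v` of `G`
off every shortest `s`-`t` path is interior to no shortest path between two pendant vertices, so
every pair counted at `v` has an endpoint in `G`: at most `n (n + 2q) = 7n²` pairs. On the other
hand `s` is counted for each of the `q² = 9n²` pairs `{xᵢ, yⱼ}`.
-/

namespace SimpleGraph

section

variable {W : Type*} {H : SimpleGraph W}

lemma Reachable.dist_map_le {G : SimpleGraph V} {u v : V} (f : G →g H) (h : G.Reachable u v) :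
    H.dist (f u) (f v) ≤ G.dist u v := by
  obtain ⟨p, hp⟩ := h.exists_walk_length_eq_dist
  simpa [hp] using H.dist_le (p.map f)

lemma Connected.dist_le_length_of_adj_dist_le_one {G : SimpleGraph V} (hG : G.Connected)
    (f : W → V) (hf : ∀ ⦃a c⦄, H.Adj a c → G.dist (f a) (f c) ≤ 1)
    {a b : W} (p : H.Walk a b) : G.dist (f a) (f b) ≤ p.length := by
  induction p with
  | nil => simp
  | @cons a c b h p ih =>
    have := hG.dist_triangle (u := f a) (v := f c) (w := f b)
    have := hf h
    simp only [Walk.length_cons]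
    omega

lemma Connected.exists_shortest_path_mem_support_iff (hH : H.Connected) {a b c : W} :
    (∃ p : H.Walk a b, p.IsPath ∧ p.length = H.dist a b ∧ c ∈ p.support) ↔
      H.dist a c + H.dist c b = H.dist a b := by
  classical
  constructor
  · rintro ⟨p, -, hp, hc⟩
    refine le_antisymm ?_ hH.dist_triangle
    rw [← hp, ← p.take_spec hc, Walk.length_append]
    exact add_le_add (H.dist_le _) (H.dist_le _)
  · intro h
    obtain ⟨p₁, hp₁⟩ := hH.exists_walk_length_eq_dist a c
    obtain ⟨p₂, hp₂⟩ := hH.exists_walk_length_eq_dist c b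
    have hlen : (p₁.append p₂).length = H.dist a b := by
      rw [Walk.length_append, hp₁, hp₂, h]
    exact ⟨p₁.append p₂, (p₁.append p₂).isPath_of_length_eq_dist hlen, hlen,
      (Walk.mem_support_append_iff _ _).mpr (.inl p₁.end_mem_support)⟩

lemma Connected.pairCount_eq_ncard (hH : H.Connected) (w : W) :
    pairCount H w = {z : Sym2 W | ∃ a b : W, z = s(a, b) ∧ a ≠ w ∧ b ≠ w ∧
      H.dist a w + H.dist w b = H.dist a b}.ncard := by
  simp only [pairCount, hH.exists_shortest_path_mem_support_iff]

lemma Connected.dist_eq_dist_add_one_of_adj_iff (hH : H.Connected) {x y c : W}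
    (hx : ∀ c, H.Adj x c ↔ c = y) (hc : c ≠ x) : H.dist x c = H.dist y c + 1 := by
  refine le_antisymm ?_ ?_
  · have hxy : H.dist x y = 1 := dist_eq_one_iff_adj.mpr ((hx y).mpr rfl)
    have := hH.dist_triangle (u := x) (v := y) (w := c)
    omega
  · obtain ⟨p, hp⟩ := hH.exists_walk_length_eq_dist x c
    cases p with
    | nil => exact absurd rfl hc
    | cons h p =>
      obtain rfl := (hx _).mp h
      simpa [← hp] using H.dist_le p

lemma Connected.pairCount_eq_zero_of_adj_iff (hH : H.Connected) {x y : W}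
    (hx : ∀ c, H.Adj x c ↔ c = y) : pairCount H x = 0 := by
  rw [hH.pairCount_eq_ncard]
  refine (congrArg Set.ncard (Set.eq_empty_of_forall_notMem ?_)).trans (Set.ncard_empty _)
  rintro _ ⟨a, b, rfl, ha, hb, h⟩
  have hxa := hH.dist_eq_dist_add_one_of_adj_iff hx ha
  have hxb := hH.dist_eq_dist_add_one_of_adj_iff hx hb
  have := hH.dist_triangle (u := a) (v := y) (w := b)
  have := H.dist_comm (u := a) (v := x)
  have := H.dist_comm (u := a) (v := y)
  omega

end

variable {G : SimpleGraph V} {s t : V} {q : ℕ}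

lemma Connected.dist_add_dist_eq_of_mem_pair (hG : G.Connected) {α β v : V}
    (hα : α = s ∨ α = t) (hβ : β = s ∨ β = t)
    (h : G.dist α v + G.dist v β = G.dist α β) :
    G.dist s v + G.dist v t = G.dist s t := by
  rcases hα with hα | hα <;> rcases hβ with hβ | hβ <;> rw [hα, hβ] at h
  · obtain rfl : s = v := hG.dist_eq_zero_iff.mp (by rw [dist_self] at h; omega)
    simp
  · exact h
  · rw [G.dist_comm (u := t), G.dist_comm (u := v) (v := s), G.dist_comm (u := t)] at h
    omega
  · obtain rfl : v = t := hG.dist_eq_zero_iff.mp (by rw [dist_self] at h; omega)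
    simp

def pendantAnchor (s t : V) : Fin q ⊕ Fin q → V := Sum.elim (fun _ => s) (fun _ => t)

lemma pendantAnchor_eq_or_eq (z : Fin q ⊕ Fin q) :
    pendantAnchor s t z = s ∨ pendantAnchor s t z = t := by
  cases z <;> simp [pendantAnchor]

lemma attach2_adj_inl_inl {u w : V} :
    (attach2 G s t q).Adj (Sum.inl u) (Sum.inl w) ↔ G.Adj u w := by
  simp only [attach2, fromRel_adj]
  constructor
  · rintro ⟨-, (⟨_, _, h₁, h₂, h⟩ | ⟨_, _, h⟩ | ⟨_, _, h⟩) |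
      (⟨_, _, h₁, h₂, h⟩ | ⟨_, _, h⟩ | ⟨_, _, h⟩)⟩
    all_goals simp_all [G.adj_comm]
  · intro h
    exact ⟨by simp [h.ne], .inl (.inl ⟨u, w, rfl, rfl, h⟩)⟩

lemma attach2_adj_inr {z : Fin q ⊕ Fin q} {c : V ⊕ (Fin q ⊕ Fin q)} :
    (attach2 G s t q).Adj (Sum.inr z) c ↔ c = Sum.inl (pendantAnchor s t z) := by
  simp only [attach2, fromRel_adj]
  constructor
  · rintro ⟨-, (⟨_, _, h₁, h₂, h⟩ | ⟨_, _, h⟩ | ⟨_, _, h⟩) |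
      (⟨_, _, h₁, h₂, h⟩ | ⟨_, _, h⟩ | ⟨_, _, h⟩)⟩
    all_goals cases z <;> simp_all [pendantAnchor]
  · rintro rfl
    cases z with
    | inl i => exact ⟨by simp, .inr (.inr (.inl ⟨i, rfl, rfl⟩))⟩
    | inr j => exact ⟨by simp, .inr (.inr (.inr ⟨j, rfl, rfl⟩))⟩

def attach2Inl (G : SimpleGraph V) (s t : V) (q : ℕ) : G →g attach2 G s t q :=
  ⟨Sum.inl, attach2_adj_inl_inl.mpr⟩

def attach2Retract (s t : V) : V ⊕ (Fin q ⊕ Fin q) → V := Sum.elim id (pendantAnchor s t)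

lemma attach2Retract_dist_le_one {a c : V ⊕ (Fin q ⊕ Fin q)} (h : (attach2 G s t q).Adj a c) :
    G.dist (attach2Retract s t a) (attach2Retract s t c) ≤ 1 := by
  rcases a with u | z
  · rcases c with w | z
    · exact (dist_eq_one_iff_adj.mpr (attach2_adj_inl_inl.mp h)).le
    · obtain rfl := Sum.inl_injective (attach2_adj_inr.mp h.symm)
      simp [attach2Retract]
  · obtain rfl := attach2_adj_inr.mp h
    simp [attach2Retract]

lemma attach2_connected (hG : G.Connected) : (attach2 G s t q).Connected := by
  have hs : ∀ a, (attach2 G s t q).Reachable (Sum.inl s) a := by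
    have hinl (u : V) : (attach2 G s t q).Reachable (Sum.inl s) (Sum.inl u) :=
      (hG s u).map (attach2Inl G s t q)
    rintro (u | z)
    · exact hinl u
    · exact (hinl _).trans (attach2_adj_inr.mpr rfl).reachable.symm
  have : Nonempty (V ⊕ (Fin q ⊕ Fin q)) := ⟨Sum.inl s⟩
  exact ⟨fun a b => (hs a).symm.trans (hs b)⟩

lemma attach2_dist_inl_inl (hG : G.Connected) (u w : V) :
    (attach2 G s t q).dist (Sum.inl u) (Sum.inl w) = G.dist u w := by
  refine le_antisymm ((hG u w).dist_map_le (attach2Inl G s t q)) ?_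
  obtain ⟨p, hp⟩ := (attach2_connected hG).exists_walk_length_eq_dist
    (Sum.inl u : V ⊕ (Fin q ⊕ Fin q)) (Sum.inl w)
  rw [← hp]
  exact hG.dist_le_length_of_adj_dist_le_one (attach2Retract s t)
    (fun _ _ h => attach2Retract_dist_le_one h) p

lemma attach2_dist_inr (hG : G.Connected) {z : Fin q ⊕ Fin q} {c : V ⊕ (Fin q ⊕ Fin q)}
    (hc : c ≠ Sum.inr z) :
    (attach2 G s t q).dist (Sum.inr z) c
      = (attach2 G s t q).dist (Sum.inl (pendantAnchor s t z)) c + 1 :=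
  (attach2_connected hG).dist_eq_dist_add_one_of_adj_iff (fun _ => attach2_adj_inr) hc

lemma attach2_dist_inr_inl (hG : G.Connected) (z : Fin q ⊕ Fin q) (v : V) :
    (attach2 G s t q).dist (Sum.inr z) (Sum.inl v) = G.dist (pendantAnchor s t z) v + 1 := by
  rw [attach2_dist_inr hG Sum.inl_ne_inr, attach2_dist_inl_inl hG]

lemma attach2_dist_inr_inr (hG : G.Connected) {z₁ z₂ : Fin q ⊕ Fin q} (h : z₁ ≠ z₂) :
    (attach2 G s t q).dist (Sum.inr z₁) (Sum.inr z₂)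
      = G.dist (pendantAnchor s t z₁) (pendantAnchor s t z₂) + 2 := by
  rw [attach2_dist_inr hG (by simpa using h.symm), dist_comm,
    attach2_dist_inr_inl hG, dist_comm]

lemma attach2_dist_add_dist_eq_of_inr_inr (hG : G.Connected) {z₁ z₂ : Fin q ⊕ Fin q} {v : V}
    (h : (attach2 G s t q).dist (Sum.inr z₁) (Sum.inl v)
        + (attach2 G s t q).dist (Sum.inl v) (Sum.inr z₂)
        = (attach2 G s t q).dist (Sum.inr z₁) (Sum.inr z₂)) :
    G.dist s v + G.dist v t = G.dist s t := by
  rw [dist_comm (u := Sum.inl v), attach2_dist_inr_inl hG, attach2_dist_inr_inl hG] at h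
  by_cases hz : z₁ = z₂
  · subst hz
    simp at h
  rw [attach2_dist_inr_inr hG hz, G.dist_comm (u := pendantAnchor s t z₂)] at h
  exact hG.dist_add_dist_eq_of_mem_pair (pendantAnchor_eq_or_eq z₁)
    (pendantAnchor_eq_or_eq z₂) (by omega)

lemma attach2_pairCount_inr (hG : G.Connected) (z : Fin q ⊕ Fin q) :
    pairCount (attach2 G s t q) (Sum.inr z) = 0 :=
  (attach2_connected hG).pairCount_eq_zero_of_adj_iff fun _ => attach2_adj_inr

lemma attach2_mul_self_le_pairCount_inl [Finite V] (hG : G.Connected) :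
    q * q ≤ pairCount (attach2 G s t q) (Sum.inl s) := by
  rw [(attach2_connected hG).pairCount_eq_ncard]
  let f : Fin q × Fin q → Sym2 (V ⊕ (Fin q ⊕ Fin q)) :=
    fun ij => s(Sum.inr (Sum.inl ij.1), Sum.inr (Sum.inr ij.2))
  have hf : f.Injective := by
    rintro ⟨i₁, j₁⟩ ⟨i₂, j₂⟩ h
    simpa [f] using h
  calc q * q = (Set.range f).ncard := by simp [Set.ncard_range_of_injective hf]
    _ ≤ _ := by
      refine Set.ncard_le_ncard ?_
      rintro _ ⟨⟨i, j⟩, rfl⟩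
      refine ⟨_, _, rfl, Sum.inr_ne_inl, Sum.inr_ne_inl, ?_⟩
      rw [dist_comm (u := Sum.inl s), attach2_dist_inr_inl hG, attach2_dist_inr_inl hG,
        attach2_dist_inr_inr hG (by simp)]
      simp [pendantAnchor, G.dist_comm (u := t)]
      omega

lemma attach2_pairCount_inl_le [Finite V] (hG : G.Connected) {v : V}
    (hv : G.dist s v + G.dist v t ≠ G.dist s t) :
    pairCount (attach2 G s t q) (Sum.inl v) ≤ Nat.card V * (Nat.card V + (q + q)) := by
  rw [(attach2_connected hG).pairCount_eq_ncard]
  let f : V × (V ⊕ (Fin q ⊕ Fin q)) → Sym2 (V ⊕ (Fin q ⊕ Fin q)) :=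
    fun uc => s(Sum.inl uc.1, uc.2)
  calc _ ≤ (Set.range f).ncard := by
        refine Set.ncard_le_ncard ?_
        rintro _ ⟨a | z₁, b | z₂, rfl, -, -, h⟩
        · exact ⟨(a, _), rfl⟩
        · exact ⟨(a, _), rfl⟩
        · exact ⟨(b, _), Sym2.eq_swap⟩
        · exact absurd (attach2_dist_add_dist_eq_of_inr_inr hG h) hv
    _ ≤ Nat.card (V × (V ⊕ (Fin q ⊕ Fin q))) := by
        rw [← Set.image_univ, ← Set.ncard_univ]
        exact Set.ncard_image_le
    _ = Nat.card V * (Nat.card V + (q + q)) := by simp [Nat.card_sum]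

end SimpleGraph

theorem stmt5_general [Fintype V] (G : SimpleGraph V) (hG : G.Connected) (s t : V)
    (w : V ⊕ (Fin (3 * Fintype.card V) ⊕ Fin (3 * Fintype.card V)))
    (hmax : ∀ u : V ⊕ (Fin (3 * Fintype.card V) ⊕ Fin (3 * Fintype.card V)),
      pairCount (attach2 G s t (3 * Fintype.card V)) u
        ≤ pairCount (attach2 G s t (3 * Fintype.card V)) w) :
    ∃ v : V, w = Sum.inl v ∧ G.dist s v + G.dist v t = G.dist s t := by
  have hn : 0 < Fintype.card V := Fintype.card_pos_iff.mpr ⟨s⟩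
  have hs := (attach2_mul_self_le_pairCount_inl hG).trans (hmax (Sum.inl s))
  rcases w with v | z
  · refine ⟨v, rfl, ?_⟩
    by_contra hv
    have hcount := attach2_pairCount_inl_le (q := 3 * Fintype.card V) hG hv
    rw [Nat.card_eq_fintype_card] at hcount
    nlinarith
  · rw [attach2_pairCount_inr hG] at hs
    nlinarith

/-- With `q = 3n`, `n ≥ 1` and `dist_G(s,t) ≥ 2`, every vertex of `G'`
maximizing the number of unordered endpoint pairs admitting a shortest path through it
lies on a shortest `s`-`t` path of `G`. -/
theorem stmt5 [Fintype V] (G : SimpleGraph V) (hG : G.Connected) (s t : V)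
    (hn : 1 ≤ Fintype.card V) (hd : 2 ≤ G.dist s t)
    (w : V ⊕ (Fin (3 * Fintype.card V) ⊕ Fin (3 * Fintype.card V)))
    (hmax : ∀ u : V ⊕ (Fin (3 * Fintype.card V) ⊕ Fin (3 * Fintype.card V)),
      pairCount (attach2 G s t (3 * Fintype.card V)) u
        ≤ pairCount (attach2 G s t (3 * Fintype.card V)) w) :
    ∃ v : V, w = Sum.inl v ∧ G.dist s v + G.dist v t = G.dist s t :=
  stmt5_general G hG s t w hmax
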